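/- arXiv:1211.0334 — 2 statements merged into one kernel-verified Lean document; each statement's English description precedes it below -/
import Mathlib

section
/- For m ∈ ℕ and n ≥ 2, consider the vector fields on ℝ^{1+n} (coordinates (t, x₁,…,xₙ), t > 0): L₀ = 2t∂_t + (m+2)∑ᵢ xᵢ∂ᵢ, L̄ᵢ = 2t^{m/2+1}∂ᵢ + (m+2)(xᵢ/t^{m/2})∂_t, and L_{ij} = xᵢ∂ⱼ − xⱼ∂ᵢ. Then [L₀, L̄ᵢ] = 0 and [L₀, L_{ij}] = 0 for all i, j. -/
/-- Partial derivative in the `i`-th coordinate of `ℝ^k`. -/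
noncomputable def pd {k : ℕ} (i : Fin k) (u : (Fin k → ℝ) → ℝ) : (Fin k → ℝ) → ℝ :=
  fun p => fderiv ℝ u p (Pi.single i 1)

variable {K : ℕ}

lemma diff_coord (k : Fin K) (p : Fin K → ℝ) :
    DifferentiableAt ℝ (fun q : Fin K → ℝ => q k) p :=
  (ContinuousLinearMap.proj (R := ℝ) (φ := fun _ : Fin K => ℝ) k).differentiableAt

lemma pd_coord (k l : Fin K) (p : Fin K → ℝ) :
    pd l (fun q : Fin K → ℝ => q k) p = if k = l then 1 else 0 := by
  unfold pd
  have hf : fderiv ℝ (fun q : Fin K → ℝ => q k) p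
      = ContinuousLinearMap.proj (R := ℝ) (φ := fun _ : Fin K => ℝ) k :=
    (ContinuousLinearMap.proj (R := ℝ) (φ := fun _ : Fin K => ℝ) k).hasFDerivAt.fderiv
  rw [hf]
  simp [Pi.single_apply]

lemma pd_const (c : ℝ) (l : Fin K) (p : Fin K → ℝ) : pd l (fun _ => c) p = 0 := by
  simp [pd]

lemma pd_mul {f g : (Fin K → ℝ) → ℝ} {p : Fin K → ℝ} (hf : DifferentiableAt ℝ f p)
    (hg : DifferentiableAt ℝ g p) (l : Fin K) :
    pd l (fun q => f q * g q) p = pd l f p * g p + f p * pd l g p := by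
  unfold pd
  rw [fderiv_fun_mul hf hg]
  simp only [ContinuousLinearMap.add_apply, ContinuousLinearMap.coe_smul',
    Pi.smul_apply, smul_eq_mul]
  ring

lemma pd_const_mul {f : (Fin K → ℝ) → ℝ} {p : Fin K → ℝ} (hf : DifferentiableAt ℝ f p)
    (c : ℝ) (l : Fin K) :
    pd l (fun q => c * f q) p = c * pd l f p := by
  unfold pd
  rw [fderiv_const_mul hf]
  simp

lemma pd_sub {f g : (Fin K → ℝ) → ℝ} {p : Fin K → ℝ} (hf : DifferentiableAt ℝ f p)
    (hg : DifferentiableAt ℝ g p) (l : Fin K) :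
    pd l (fun q => f q - g q) p = pd l f p - pd l g p := by
  unfold pd
  rw [fderiv_fun_sub hf hg]
  simp

lemma hasFDerivAt_rpow_coord (k₀ : Fin K) (r : ℝ) {p : Fin K → ℝ} (hp : p k₀ ≠ 0) :
    HasFDerivAt (fun q : Fin K → ℝ => q k₀ ^ r)
      ((r * p k₀ ^ (r - 1)) • ContinuousLinearMap.proj (R := ℝ) (φ := fun _ : Fin K => ℝ) k₀) p :=
  ((Real.hasDerivAt_rpow_const (x := p k₀) (p := r) (Or.inl hp)).comp_hasFDerivAt p
    (ContinuousLinearMap.proj (R := ℝ) (φ := fun _ : Fin K => ℝ) k₀).hasFDerivAt :)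

lemma pd_rpow (k₀ : Fin K) (r : ℝ) {p : Fin K → ℝ} (hp : p k₀ ≠ 0) (l : Fin K) :
    pd l (fun q : Fin K → ℝ => q k₀ ^ r) p
      = r * p k₀ ^ (r - 1) * (if k₀ = l then 1 else 0) := by
  unfold pd
  rw [(hasFDerivAt_rpow_coord k₀ r hp).fderiv]
  simp [Pi.single_apply]

lemma diff_rpow (k₀ : Fin K) (r : ℝ) {p : Fin K → ℝ} (hp : p k₀ ≠ 0) :
    DifferentiableAt ℝ (fun q : Fin K → ℝ => q k₀ ^ r) p :=
  (hasFDerivAt_rpow_coord k₀ r hp).differentiableAt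

lemma div_ev (s k₀ : Fin K) (r : ℝ) {p : Fin K → ℝ} (hp : 0 < p k₀) :
    (fun q : Fin K → ℝ => q s / q k₀ ^ r) =ᶠ[nhds p] (fun q => q s * q k₀ ^ (-r)) := by
  have ho : IsOpen {q : Fin K → ℝ | 0 < q k₀} :=
    isOpen_lt continuous_const (continuous_apply k₀)
  filter_upwards [ho.mem_nhds hp] with q hq
  rw [Real.rpow_neg (le_of_lt hq), div_eq_mul_inv]

lemma diff_div (s k₀ : Fin K) (r : ℝ) {p : Fin K → ℝ} (hp : 0 < p k₀) :
    DifferentiableAt ℝ (fun q : Fin K → ℝ => q s / q k₀ ^ r) p :=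
  (Filter.EventuallyEq.differentiableAt_iff (div_ev s k₀ r hp)).mpr
    ((diff_coord s p).mul (diff_rpow k₀ (-r) hp.ne'))

lemma pd_congr {f g : (Fin K → ℝ) → ℝ} {p : Fin K → ℝ} (h : f =ᶠ[nhds p] g) (l : Fin K) :
    pd l f p = pd l g p := by
  unfold pd; rw [h.fderiv_eq]

lemma pd_div (s k₀ : Fin K) (r : ℝ) {p : Fin K → ℝ} (hp : 0 < p k₀) (l : Fin K) :
    pd l (fun q : Fin K → ℝ => q s / q k₀ ^ r) p
      = (if s = l then 1 else 0) * p k₀ ^ (-r)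
        + p s * (-r * p k₀ ^ (-r - 1) * (if k₀ = l then 1 else 0)) := by
  rw [pd_congr (div_ev s k₀ r hp) l,
    pd_mul (diff_coord s p) (diff_rpow k₀ (-r) hp.ne') l, pd_coord, pd_rpow k₀ (-r) hp.ne']

noncomputable def Vf {K : ℕ} (a : Fin K → (Fin K → ℝ) → ℝ) (u : (Fin K → ℝ) → ℝ) :
    (Fin K → ℝ) → ℝ :=
  fun p => ∑ k, a k p * pd k u p

lemma pd_smooth_diff (k : Fin K) {u : (Fin K → ℝ) → ℝ} (hu : ContDiff ℝ (⊤ : ℕ∞) u) :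
    Differentiable ℝ (pd k u) := by
  have h1 : ContDiff ℝ 1 (fun q : Fin K → ℝ => fderiv ℝ u q) := hu.fderiv_right (WithTop.coe_le_coe.mpr le_top)
  exact (h1.clm_apply contDiff_const).differentiable one_ne_zero

lemma pd_symm (i j : Fin K) {u : (Fin K → ℝ) → ℝ} (hu : ContDiff ℝ (⊤ : ℕ∞) u) (p : Fin K → ℝ) :
    pd i (pd j u) p = pd j (pd i u) p := by
  have hsym : IsSymmSndFDerivAt ℝ u p := hu.contDiffAt.isSymmSndFDerivAt (by
    rw [minSmoothness_of_isRCLikeNormedField]; exact WithTop.coe_le_coe.mpr le_top)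
  have key : ∀ a b : Fin K, pd a (pd b u) p
      = fderiv ℝ (fderiv ℝ u) p (Pi.single a 1) (Pi.single b 1) := by
    intro a b
    have hd : DifferentiableAt ℝ (fun q : Fin K → ℝ => fderiv ℝ u q) p :=
      ((hu.fderiv_right (m := 1) (WithTop.coe_le_coe.mpr le_top)).differentiable one_ne_zero) p
    unfold pd
    rw [fderiv_clm_apply hd (differentiableAt_const _)]
    simp
  rw [key, key, hsym]

lemma pd_Vf (a : Fin K → (Fin K → ℝ) → ℝ) (u : (Fin K → ℝ) → ℝ) (hu : ContDiff ℝ (⊤ : ℕ∞) u)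
    (p : Fin K → ℝ) (ha : ∀ k, DifferentiableAt ℝ (a k) p) (j : Fin K) :
    pd j (Vf a u) p = ∑ k, (pd j (a k) p * pd k u p + a k p * pd j (pd k u) p) := by
  have hpdu : ∀ k : Fin K, DifferentiableAt ℝ (pd k u) p :=
    fun k => (pd_smooth_diff k hu) p
  have h0 : pd j (Vf a u) p
      = (fderiv ℝ (fun q => ∑ k, a k q * pd k u q) p) (Pi.single j 1) := rfl
  rw [h0, fderiv_fun_sum (A := fun k q => a k q * pd k u q) (fun k _ => ((ha k).mul (hpdu k))), ContinuousLinearMap.sum_apply]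
  refine Finset.sum_congr rfl fun k _ => ?_
  rw [fderiv_fun_mul (ha k) (hpdu k)]
  simp only [ContinuousLinearMap.add_apply, ContinuousLinearMap.coe_smul',
    Pi.smul_apply, smul_eq_mul]
  unfold pd
  ring

lemma Vf_comm (a b : Fin K → (Fin K → ℝ) → ℝ) (u : (Fin K → ℝ) → ℝ) (hu : ContDiff ℝ (⊤ : ℕ∞) u)
    (p : Fin K → ℝ) (ha : ∀ k, DifferentiableAt ℝ (a k) p)
    (hb : ∀ k, DifferentiableAt ℝ (b k) p) :
    Vf b (Vf a u) p - Vf a (Vf b u) p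
      = ∑ k, (Vf b (a k) p - Vf a (b k) p) * pd k u p := by
  have expand : ∀ (c d : Fin K → (Fin K → ℝ) → ℝ), (∀ k, DifferentiableAt ℝ (c k) p) →
      Vf d (Vf c u) p = (∑ k, ∑ j, d j p * (pd j (c k) p * pd k u p))
        + ∑ j, ∑ k, d j p * (c k p * pd j (pd k u) p) := by
    intro c d hc
    have h1 : Vf d (Vf c u) p = ∑ j, d j p * pd j (Vf c u) p := rfl
    rw [h1]
    simp only [pd_Vf c u hu p hc, Finset.mul_sum, mul_add, Finset.sum_add_distrib]
    congr 1
    exact Finset.sum_comm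
  rw [expand a b ha, expand b a hb]
  have cancel : ∑ j, ∑ k, b j p * (a k p * pd j (pd k u) p)
      = ∑ j, ∑ k, a j p * (b k p * pd j (pd k u) p) := by
    rw [Finset.sum_comm]
    exact Finset.sum_congr rfl fun j _ => Finset.sum_congr rfl fun k _ => by
      rw [pd_symm k j hu p]; ring
  rw [cancel, add_sub_add_right_eq_sub, ← Finset.sum_sub_distrib]
  refine Finset.sum_congr rfl fun k _ => ?_
  simp only [Vf]
  rw [sub_mul, Finset.sum_mul, Finset.sum_mul, ← Finset.sum_sub_distrib,
    ← Finset.sum_sub_distrib]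
  exact Finset.sum_congr rfl fun j _ => by ring

/-- `L₀ = 2t∂_t + (m+2)∑ᵢ xᵢ∂ᵢ`, with coordinates `p 0 = t`, `p i.succ = xᵢ`. -/
noncomputable def L0 (n m : ℕ) (u : (Fin (n + 1) → ℝ) → ℝ) : (Fin (n + 1) → ℝ) → ℝ :=
  fun p => 2 * p 0 * pd 0 u p + (m + 2) * ∑ i : Fin n, p i.succ * pd i.succ u p

/-- `L̄ᵢ = 2t^{m/2+1}∂ᵢ + (m+2)(xᵢ/t^{m/2})∂_t`. -/
noncomputable def Lb (n m : ℕ) (i : Fin n) (u : (Fin (n + 1) → ℝ) → ℝ) : (Fin (n + 1) → ℝ) → ℝ :=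
  fun p => 2 * p 0 ^ ((m : ℝ) / 2 + 1) * pd i.succ u p
    + (m + 2) * (p i.succ / p 0 ^ ((m : ℝ) / 2)) * pd 0 u p

/-- Rotation field `L_{ij} = xᵢ∂ⱼ − xⱼ∂ᵢ`. -/
noncomputable def Lrot (n : ℕ) (i j : Fin n) (u : (Fin (n + 1) → ℝ) → ℝ) :
    (Fin (n + 1) → ℝ) → ℝ :=
  fun p => p i.succ * pd j.succ u p - p j.succ * pd i.succ u p


/-- The generalized Tricomi operator `P = ∂_t² − t^m Δ`. -/
noncomputable def Tric (n m : ℕ) (u : (Fin (n + 1) → ℝ) → ℝ) : (Fin (n + 1) → ℝ) → ℝ :=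
  fun p => pd 0 (pd 0 u) p - p 0 ^ m * ∑ i : Fin n, pd i.succ (pd i.succ u) p

noncomputable def Acoef (n m : ℕ) : Fin (n + 1) → (Fin (n + 1) → ℝ) → ℝ :=
  Fin.cases (fun q => 2 * q 0) (fun i q => ((m : ℝ) + 2) * q i.succ)

noncomputable def Bcoef (n m : ℕ) (i : Fin n) : Fin (n + 1) → (Fin (n + 1) → ℝ) → ℝ :=
  Fin.cases (fun q => ((m : ℝ) + 2) * (q i.succ / q 0 ^ ((m : ℝ) / 2)))
    (fun j q => (if j = i then (1:ℝ) else 0) * (2 * q 0 ^ ((m : ℝ) / 2 + 1)))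

noncomputable def Ccoef (n : ℕ) (i j : Fin n) : Fin (n + 1) → (Fin (n + 1) → ℝ) → ℝ :=
  Fin.cases (fun _ => 0)
    (fun k q => (if k = j then (1:ℝ) else 0) * q i.succ - (if k = i then (1:ℝ) else 0) * q j.succ)

lemma L0_eq (n m : ℕ) (u : (Fin (n + 1) → ℝ) → ℝ) : L0 n m u = Vf (Acoef n m) u := by
  funext q
  simp [L0, Vf, Acoef, Fin.sum_univ_succ, Finset.mul_sum, mul_assoc]

lemma Lb_eq (n m : ℕ) (i : Fin n) (u : (Fin (n + 1) → ℝ) → ℝ) :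
    Lb n m i u = Vf (Bcoef n m i) u := by
  funext q
  simp only [Lb, Vf, Bcoef, Fin.sum_univ_succ, Fin.cases_zero, Fin.cases_succ,
    ite_mul, one_mul, zero_mul, Finset.sum_ite_eq', Finset.mem_univ, if_true]
  ring

lemma Lrot_eq (n : ℕ) (i j : Fin n) (u : (Fin (n + 1) → ℝ) → ℝ) :
    Lrot n i j u = Vf (Ccoef n i j) u := by
  funext q
  simp only [Lrot, Vf, Ccoef, Fin.sum_univ_succ, Fin.cases_zero, Fin.cases_succ,
    sub_mul, ite_mul, one_mul, zero_mul, Finset.sum_sub_distrib,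
    Finset.sum_ite_eq', Finset.mem_univ, if_true]
  ring

/-- `[L₀, L̄ᵢ] = 0` and `[L₀, L_{ij}] = 0` on `{t > 0}`. -/
theorem stmt7 (n m : ℕ) (hn : 2 ≤ n) (u : (Fin (n + 1) → ℝ) → ℝ)
    (hu : ContDiff ℝ (⊤ : ℕ∞) u) (p : Fin (n + 1) → ℝ) (hp : 0 < p 0) :
    (∀ i : Fin n, L0 n m (Lb n m i u) p - Lb n m i (L0 n m u) p = 0) ∧
    (∀ i j : Fin n, L0 n m (Lrot n i j u) p - Lrot n i j (L0 n m u) p = 0) := by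
  have hsz : ∀ jj : Fin n, (jj.succ = (0 : Fin (n+1))) = False := fun jj => by
    simp [Fin.succ_ne_zero]
  have hzs : ∀ jj : Fin n, ((0 : Fin (n+1)) = jj.succ) = False := fun jj => by
    simp [eq_comm, Fin.succ_ne_zero]
  have hss : ∀ x y : Fin n, (Fin.succ x = Fin.succ y) = (x = y) := fun x y => by
    simp [Fin.succ_inj]
  have hA : ∀ k, DifferentiableAt ℝ (Acoef n m k) p := by
    intro k
    induction k using Fin.cases with
    | zero =>
      simp only [Acoef, Fin.cases_zero]
      exact (diff_coord 0 p).const_mul 2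
    | succ i =>
      simp only [Acoef, Fin.cases_succ]
      exact (diff_coord i.succ p).const_mul _
  have hdA0 : ∀ l, pd l (Acoef n m 0) p = 2 * (if (0 : Fin (n+1)) = l then 1 else 0) := by
    intro l
    simp only [Acoef, Fin.cases_zero]
    rw [pd_const_mul (diff_coord 0 p) 2 l, pd_coord]
  have hdAs : ∀ (l : Fin (n+1)) (kk : Fin n), pd l (Acoef n m kk.succ) p
      = ((m : ℝ) + 2) * (if kk.succ = l then 1 else 0) := by
    intro l kk
    simp only [Acoef, Fin.cases_succ]
    rw [pd_const_mul (diff_coord kk.succ p) _ l, pd_coord]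
  constructor
  · intro i
    have hB : ∀ k, DifferentiableAt ℝ (Bcoef n m i k) p := by
      intro k
      induction k using Fin.cases with
      | zero =>
        simp only [Bcoef, Fin.cases_zero]
        exact (diff_div i.succ 0 ((m : ℝ)/2) hp).const_mul _
      | succ j =>
        simp only [Bcoef, Fin.cases_succ]
        exact ((diff_rpow 0 ((m : ℝ)/2 + 1) hp.ne').const_mul 2).const_mul _
    simp only [L0_eq, Lb_eq]
    rw [Vf_comm (Bcoef n m i) (Acoef n m) u hu p hB hA]
    refine Finset.sum_eq_zero fun k _ => mul_eq_zero_of_left ?_ _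
    induction k using Fin.cases with
    | zero =>
      have hd0 : ∀ l, pd l (Bcoef n m i 0) p
          = ((m : ℝ) + 2) * ((if i.succ = l then 1 else 0) * p 0 ^ (-((m : ℝ)/2))
            + p i.succ * (-((m : ℝ)/2) * p 0 ^ (-((m : ℝ)/2) - 1)
              * (if (0 : Fin (n+1)) = l then 1 else 0))) := by
        intro l
        simp only [Bcoef, Fin.cases_zero]
        rw [pd_const_mul (diff_div i.succ 0 ((m : ℝ)/2) hp) _ l, pd_div i.succ 0 _ hp l]
      have e2 : p i.succ / p 0 ^ ((m : ℝ)/2) = p i.succ * p 0 ^ (-((m : ℝ)/2)) := by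
        rw [div_eq_mul_inv, ← Real.rpow_neg hp.le]
      have e1 : p 0 ^ (-((m : ℝ)/2)) = p 0 ^ (-((m : ℝ)/2) - 1) * p 0 := by
        rw [← Real.rpow_add_one hp.ne' (-((m : ℝ)/2) - 1)]
        norm_num
      simp only [Vf, Fin.sum_univ_succ]
      simp only [hd0, hdA0, hdAs]
      simp only [Acoef, Bcoef, Fin.cases_zero, Fin.cases_succ]
      simp only [hsz, hzs, hss, if_true, if_false, mul_ite, ite_mul, mul_zero,
        zero_mul, mul_one, one_mul, add_zero, zero_add, Finset.sum_ite_eq,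
        Finset.mem_univ, Finset.sum_const_zero, neg_zero]
      rw [e2, e1]
      ring
    | succ j =>
      have hdB : ∀ l, pd l (Bcoef n m i j.succ) p
          = (if j = i then (1:ℝ) else 0) * (2 * (((m : ℝ)/2 + 1) * p 0 ^ ((m : ℝ)/2 + 1 - 1)
            * (if (0 : Fin (n+1)) = l then 1 else 0))) := by
        intro l
        simp only [Bcoef, Fin.cases_succ]
        rw [pd_const_mul ((diff_rpow 0 ((m : ℝ)/2 + 1) hp.ne').const_mul 2) _ l,
          pd_const_mul (diff_rpow 0 ((m : ℝ)/2 + 1) hp.ne') 2 l, pd_rpow 0 _ hp.ne' l]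
      have e3 : p 0 ^ ((m : ℝ)/2 + 1) = p 0 ^ ((m : ℝ)/2) * p 0 :=
        Real.rpow_add_one hp.ne' _
      have eex : (m : ℝ)/2 + 1 - 1 = (m : ℝ)/2 := by ring
      simp only [Vf, Fin.sum_univ_succ]
      simp only [hdB, hdA0, hdAs]
      simp only [Acoef, Bcoef, Fin.cases_zero, Fin.cases_succ]
      simp only [hsz, hzs, hss, if_true, if_false, mul_ite, ite_mul, mul_zero,
        zero_mul, mul_one, one_mul, add_zero, zero_add, Finset.sum_ite_eq,
        Finset.sum_ite_eq', Finset.mem_univ, eex, Finset.sum_const_zero, neg_zero]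
      rw [e3]
      ring
  · intro i j
    have hC : ∀ k, DifferentiableAt ℝ (Ccoef n i j k) p := by
      intro k
      induction k using Fin.cases with
      | zero =>
        simp only [Ccoef, Fin.cases_zero]
        exact differentiableAt_const 0
      | succ kk =>
        simp only [Ccoef, Fin.cases_succ]
        exact ((diff_coord i.succ p).const_mul _).sub ((diff_coord j.succ p).const_mul _)
    simp only [L0_eq, Lrot_eq]
    rw [Vf_comm (Ccoef n i j) (Acoef n m) u hu p hC hA]
    refine Finset.sum_eq_zero fun k _ => mul_eq_zero_of_left ?_ _
    induction k using Fin.cases with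
    | zero =>
      have hd0 : ∀ l, pd l (Ccoef n i j 0) p = 0 := by
        intro l
        simp only [Ccoef, Fin.cases_zero]
        exact pd_const 0 l p
      simp only [Vf, Fin.sum_univ_succ]
      simp only [hd0, hdA0, hdAs]
      simp only [Acoef, Ccoef, Fin.cases_zero, Fin.cases_succ]
      simp only [hsz, hzs, hss, if_true, if_false, mul_ite, ite_mul, mul_zero,
        zero_mul, mul_one, one_mul, add_zero, zero_add, sub_zero, zero_sub, sub_mul,
        mul_sub, Finset.sum_sub_distrib, Finset.sum_ite_eq, Finset.mem_univ,
        Finset.sum_const_zero, neg_zero]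
    | succ k =>
      have hdC : ∀ l, pd l (Ccoef n i j k.succ) p
          = (if k = j then (1:ℝ) else 0) * (if i.succ = l then 1 else 0)
            - (if k = i then (1:ℝ) else 0) * (if j.succ = l then 1 else 0) := by
        intro l
        simp only [Ccoef, Fin.cases_succ]
        rw [pd_sub ((diff_coord i.succ p).const_mul _) ((diff_coord j.succ p).const_mul _) l,
          pd_const_mul (diff_coord i.succ p) _ l, pd_const_mul (diff_coord j.succ p) _ l,
          pd_coord, pd_coord]
      simp only [Vf, Fin.sum_univ_succ]
      simp only [hdC, hdA0, hdAs]
      simp only [Acoef, Ccoef, Fin.cases_zero, Fin.cases_succ]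
      simp only [hsz, hzs, hss, if_true, if_false, mul_ite, ite_mul, mul_zero,
        zero_mul, mul_one, one_mul, add_zero, zero_add, mul_sub, sub_mul,
        Finset.sum_sub_distrib, Finset.sum_ite_eq, Finset.mem_univ,
        Finset.sum_const_zero]
      ring
end

section
/- Let 0 < |x| < φ with x₁ > 0, x₂ ∈ ℝ, and set A = ∫_{|x|/φ}^{1} (|x₂| φ² s / √(φ²s² − |x|²)) · (1/(φ²s² − x₁²)) ds. Then A = |arctan(a x₂/(|x|+x₁)) + arctan(a x₂/(|x|−x₁))| where a = √((φ−|x|)/(φ+|x|)); in particular A ≤ π. -/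
/-!
With `r = |x|`, the relation `x₁² + |x₂|² = r²` makes the integrand the derivative of
`s ↦ arctan (√(φ²s² - r²) / |x₂|)`, which vanishes at `s = r/φ`; hence `A = arctan (√(φ² - r²) / |x₂|)`.
By the arctangent addition formula the sum on the right is `arctan (2ar / ((1 - a²) x₂))`, and
`2ar / (1 - a²) = √(φ² - r²)` for `a = √((φ - r)/(φ + r))`.
-/

open Real

lemma abs_arctan (x : ℝ) : |arctan x| = arctan |x| := by
  rcases le_or_gt 0 x with hx | hx
  · rw [abs_of_nonneg hx, abs_of_nonneg (arctan_nonneg.mpr hx)]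
  · rw [abs_of_neg hx, abs_of_neg (arctan_lt_zero.mpr hx), arctan_neg]

section ArctanAntiderivative

variable {φ r b c : ℝ}

lemma hasDerivAt_arctan_sqrt_div (hb : b ≠ 0) (hc : c ^ 2 + b ^ 2 = r ^ 2) {s : ℝ}
    (hs : r ^ 2 < φ ^ 2 * s ^ 2) :
    HasDerivAt (fun t => arctan (√(φ ^ 2 * t ^ 2 - r ^ 2) / b))
      (b * φ ^ 2 * s / √(φ ^ 2 * s ^ 2 - r ^ 2) * (1 / (φ ^ 2 * s ^ 2 - c ^ 2))) s := by
  have hu : 0 < φ ^ 2 * s ^ 2 - r ^ 2 := sub_pos.mpr hs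
  have hinner : HasDerivAt (fun t : ℝ => φ ^ 2 * t ^ 2 - r ^ 2) (φ ^ 2 * (2 * s)) s := by
    simpa using ((hasDerivAt_pow 2 s).const_mul (φ ^ 2)).sub_const (r ^ 2)
  convert ((hinner.sqrt hu.ne').div_const b).arctan using 1
  have hsq : √(φ ^ 2 * s ^ 2 - r ^ 2) ^ 2 = φ ^ 2 * s ^ 2 - r ^ 2 := sq_sqrt hu.le
  have hc' : φ ^ 2 * s ^ 2 - c ^ 2 ≠ 0 := by nlinarith
  have hsqrt : √(φ ^ 2 * s ^ 2 - r ^ 2) ≠ 0 := (sqrt_pos.mpr hu).ne'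
  field_simp
  linear_combination φ ^ 2 * s * (hsq + hc)

lemma integral_eq_arctan_sqrt_div (hr : 0 ≤ r) (hrφ : r < φ) (hb : 0 < b)
    (hc : c ^ 2 + b ^ 2 = r ^ 2) :
    ∫ s in (r / φ)..1, b * φ ^ 2 * s / √(φ ^ 2 * s ^ 2 - r ^ 2) * (1 / (φ ^ 2 * s ^ 2 - c ^ 2))
      = arctan (√(φ ^ 2 - r ^ 2) / b) := by
  have hφ : 0 < φ := hr.trans_lt hrφ
  have hle : r / φ ≤ 1 := (div_le_one hφ).mpr hrφ.le
  have hlower : ∀ s ∈ Set.Ioo (r / φ) 1, r ^ 2 < φ ^ 2 * s ^ 2 := fun s hs => by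
    have : r < φ * s := by have := (div_lt_iff₀ hφ).mp hs.1; linarith
    nlinarith
  have hcont : ContinuousOn (fun t => arctan (√(φ ^ 2 * t ^ 2 - r ^ 2) / b))
      (Set.Icc (r / φ) 1) := by
    fun_prop
  have hderiv := fun s hs => hasDerivAt_arctan_sqrt_div hb.ne' hc (hlower s hs)
  have hnonneg : ∀ s ∈ Set.Ioo (r / φ) 1,
      0 ≤ b * φ ^ 2 * s / √(φ ^ 2 * s ^ 2 - r ^ 2) * (1 / (φ ^ 2 * s ^ 2 - c ^ 2)) := by
    intro s hs
    have hs0 : 0 < s := (div_nonneg hr hφ.le).trans_lt hs.1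
    have : 0 < φ ^ 2 * s ^ 2 - c ^ 2 := by nlinarith [hlower s hs]
    positivity
  have hint := (intervalIntegrable_iff_integrableOn_Ioc_of_le hle).mpr
    (intervalIntegral.integrableOn_deriv_of_nonneg hcont hderiv hnonneg)
  rw [intervalIntegral.integral_eq_sub_of_hasDeriv_right_of_le hle hcont
    (fun s hs => (hderiv s hs).hasDerivWithinAt) hint]
  have hstart : φ ^ 2 * (r / φ) ^ 2 - r ^ 2 = 0 := by field_simp; ring
  simp [hstart]

end ArctanAntiderivative

section ArctanSum

variable {x₁ x₂ r : ℝ}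

lemma arctan_add_arctan_div_add_div_sub {a : ℝ} (hx : x₁ ^ 2 + x₂ ^ 2 = r ^ 2) (hx₁ : |x₁| < r)
    (ha : a ^ 2 < 1) :
    arctan (a * x₂ / (r + x₁)) + arctan (a * x₂ / (r - x₁))
      = arctan (2 * a * r / (1 - a ^ 2) / x₂) := by
  obtain ⟨hplus, hminus⟩ : 0 < r + x₁ ∧ 0 < r - x₁ := by
    constructor <;> linarith [neg_abs_le x₁, le_abs_self x₁]
  have hx₂ : x₂ ≠ 0 := by
    rintro rfl
    nlinarith [sq_abs x₁, abs_nonneg x₁]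
  have hprod : a * x₂ / (r + x₁) * (a * x₂ / (r - x₁)) = a ^ 2 := by
    field_simp
    linear_combination a ^ 2 * hx
  rw [arctan_add (hprod ▸ ha), hprod]
  congr 1
  have : 1 - a ^ 2 ≠ 0 := by linarith
  field_simp
  linear_combination 2 * a * r * hx

lemma two_mul_sqrt_mul_div_one_sub_sq {φ : ℝ} (hr : 0 < r) (hrφ : r < φ) :
    2 * √((φ - r) / (φ + r)) * r / (1 - √((φ - r) / (φ + r)) ^ 2) = √(φ ^ 2 - r ^ 2) := by
  have hq : 0 ≤ (φ - r) / (φ + r) := div_nonneg (by linarith) (by linarith)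
  have hsum : φ + r ≠ 0 := by linarith
  have hsqrt : √(φ ^ 2 - r ^ 2) = √((φ - r) / (φ + r)) * (φ + r) := by
    rw [show φ ^ 2 - r ^ 2 = (φ - r) / (φ + r) * (φ + r) ^ 2 by field_simp; ring,
      sqrt_mul hq, sqrt_sq (by linarith)]
  have hdenom : 1 - (φ - r) / (φ + r) = 2 * r / (φ + r) := by field_simp; ring
  rw [sq_sqrt hq, hsqrt, hdenom]
  field_simp

end ArctanSum

/-- Closed form of the integral
`A = ∫_{|x|/φ}^1 (|x₂|φ²s/√(φ²s²−|x|²)) (1/(φ²s²−x₁²)) ds` as a sum of arctangents,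
with `a = √((φ−|x|)/(φ+|x|))`; in particular `A ≤ π`. -/
theorem stmt17 (φ x₁ x₂ r a : ℝ)
    (hr : r = Real.sqrt (x₁ ^ 2 + x₂ ^ 2))
    (ha : a = Real.sqrt ((φ - r) / (φ + r)))
    (h1 : 0 < x₁) (h2 : x₁ < r) (h3 : r < φ) :
    (∫ s in (r / φ)..1,
        |x₂| * φ ^ 2 * s / Real.sqrt (φ ^ 2 * s ^ 2 - r ^ 2) *
          (1 / (φ ^ 2 * s ^ 2 - x₁ ^ 2)))
      = |Real.arctan (a * x₂ / (r + x₁)) + Real.arctan (a * x₂ / (r - x₁))| ∧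
    (∫ s in (r / φ)..1,
        |x₂| * φ ^ 2 * s / Real.sqrt (φ ^ 2 * s ^ 2 - r ^ 2) *
          (1 / (φ ^ 2 * s ^ 2 - x₁ ^ 2))) ≤ Real.pi := by
  have hr0 : 0 < r := h1.trans h2
  have hx : x₁ ^ 2 + x₂ ^ 2 = r ^ 2 := by rw [hr, sq_sqrt (by positivity)]
  have hx₁ : |x₁| < r := by rwa [abs_of_pos h1]
  have hx₂ : 0 < |x₂| := abs_pos.mpr fun h => by subst h; nlinarith
  have ha2 : a ^ 2 < 1 := by
    rw [ha, sq_sqrt (div_nonneg (by linarith) (by linarith)), div_lt_one (by linarith)]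
    linarith
  have hintegral := integral_eq_arctan_sqrt_div hr0.le h3 hx₂ (c := x₁) (by rw [sq_abs, hx])
  rw [hintegral, arctan_add_arctan_div_add_div_sub hx hx₁ ha2, ha,
    two_mul_sqrt_mul_div_one_sub_sq hr0 h3, abs_arctan, abs_div, abs_of_nonneg (sqrt_nonneg _)]
  exact ⟨rfl, (arctan_lt_pi_div_two _).le.trans (by linarith [pi_pos])⟩
end
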